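/- For all integers m, k ≥ 1, d(0, m, s, k, 0) = (−1)^{binom(k+1,2)·m} · s^{binom(k+1,2)·m − k} · q^{k·m·(k·m+m+k−3)/4} · fac(k, x, q^m·s, m) · d(0, m, q^m·s, k−1, 0), where k·m·(k·m+m+k−3)/4 is an integer. -/

import Mathlib

open Finset

variable {K : Type*} [Field K]

noncomputable def qFibPos (q x t : K) : ℕ → K
  | 0 => 0
  | 1 => 1
  | n + 2 => x * qFibPos q x t (n + 1) + q ^ n * t * qFibPos q x t n

noncomputable def qFibNeg (q x t : K) : ℕ → K
  | 0 => 0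
  | 1 => q / t
  | m + 2 => (qFibNeg q x t m - x * qFibNeg q x t (m + 1)) * q ^ (m + 2) / t

/-- The Carlitz q-Fibonacci polynomial `f(n, x, t)` for `n : ℤ`, defined by `f 0 = 0`,
`f 1 = 1` and `f n = x * f (n-1) + q^(n-2) * t * f (n-2)`, solved backwards for `n < 0`. -/
noncomputable def qFib (q x t : K) : ℤ → K
  | Int.ofNat n => qFibPos q x t n
  | Int.negSucc m => qFibNeg q x t (m + 1)

/-- `fac(k, x, t, m) = ∏_{i=1}^{k} f(i·m, x, t)`. -/
noncomputable def qFac (q x t : K) (k m : ℕ) : K :=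
  ∏ i ∈ Finset.range k, qFib q x t (((i : ℤ) + 1) * m)

/-- The determinant
`d(n, m, s, k, j) = det( f(n+m(i+[i≥j]),x,s)^h · f(n+m(i+[i≥j])-1,x,qs)^{k-h} )_{i,h=0}^{k}`. -/
noncomputable def ddet (q x s : K) (n : ℤ) (m k j : ℕ) : K :=
  Matrix.det (Matrix.of fun i h : Fin (k + 1) =>
    qFib q x s (n + m * ((i : ℕ) + if j ≤ (i : ℕ) then 1 else 0)) ^ (h : ℕ) *
      qFib q x (q * s) (n + m * ((i : ℕ) + if j ≤ (i : ℕ) then 1 else 0) - 1) ^ (k - (h : ℕ)))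

/-!
The rows of `d(0, m, s, k, 0)` are `(a_i, b_i) = (f(m(i+1), s), f(m(i+1) - 1, qs))`, so it is
the projective Vandermonde determinant `∏_{i<j} (a_j b_i - a_i b_j)`. The addition formula
`f(n + r, t) = f(n+1, t) f(r, qⁿt) + qⁿt f(n, t) f(r-1, qⁿ⁺¹t)` makes every `(a_i, b_i)` the
image of `(f(mi, qᵐs), f(mi - 1, qᵐ⁺¹s))` under one linear map, whose determinant is the
Cassini expression `(-1)ᵐ q^C(m+1,2) sᵐ`. In the new rows the first has `f(0) = 0`; expanding
along it leaves `f(-1, qᵐ⁺¹s)ᵏ = (qᵐs)⁻ᵏ`, the product `fac(k, x, qᵐs, m)` and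
`d(0, m, qᵐs, k-1, 0)`.
-/

section CarlitzFibonacci

variable (q x t : K)

@[simp] lemma qFib_zero : qFib q x t 0 = 0 := rfl

@[simp] lemma qFib_one : qFib q x t 1 = 1 := rfl

lemma qFib_neg_one : qFib q x t (-1) = q / t := rfl

lemma qFib_natCast_add_two (n : ℕ) :
    qFib q x t (n + 2) = x * qFib q x t (n + 1) + q ^ n * t * qFib q x t n := rfl

lemma qFib_neg_natCast (n : ℕ) : qFib q x t (-n) = qFibNeg q x t n := by
  rcases n with _ | n <;> rfl

theorem qFib_cassini (n : ℕ) :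
    qFib q x t (n + 2) * qFib q x (q * t) n - qFib q x t (n + 1) * qFib q x (q * t) (n + 1) =
      (-1) ^ (n + 1) * q ^ (n + 1).choose 2 * t ^ n := by
  induction n with
  | zero => simp
  | succ n ih =>
    push_cast
    rw [show (n : ℤ) + 1 + 2 = (n + 1 : ℕ) + 2 by push_cast; ring, qFib_natCast_add_two,
      show (n : ℤ) + 1 + 1 = n + 2 by ring, qFib_natCast_add_two q x (q * t) n,
      Nat.choose_succ_succ' (n + 1), Nat.choose_one_right]
    push_cast
    rw [show (n : ℤ) + 1 + 1 = n + 2 by ring]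
    linear_combination (-(q ^ (n + 1) * t)) * ih

variable {q t}

theorem qFib_add_two (hq : q ≠ 0) (ht : t ≠ 0) (n : ℤ) :
    qFib q x t (n + 2) = x * qFib q x t (n + 1) + q ^ n * t * qFib q x t n := by
  obtain ⟨n, rfl | rfl⟩ := Int.eq_nat_or_neg n
  · exact_mod_cast qFib_natCast_add_two q x t n
  rcases n with _ | _ | n
  · simpa using qFib_natCast_add_two q x t 0
  · simp [qFib_neg_one]
    field_simp
  · have h₂ : -((n + 2 : ℕ) : ℤ) + 2 = -(n : ℤ) := by push_cast; ring
    have h₁ : -((n + 2 : ℕ) : ℤ) + 1 = -((n + 1 : ℕ) : ℤ) := by push_cast; ring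
    rw [h₂, h₁, qFib_neg_natCast, qFib_neg_natCast, qFib_neg_natCast, qFibNeg, zpow_neg,
      zpow_natCast]
    field_simp
    ring

theorem qFib_add (hq : q ≠ 0) (ht : t ≠ 0) (n : ℕ) : ∀ r : ℕ,
    qFib q x t (n + r) = qFib q x t (n + 1) * qFib q x (q ^ n * t) r +
      q ^ n * t * qFib q x t n * qFib q x (q ^ (n + 1) * t) (r - 1)
  | 0 => by
    simp [qFib_neg_one]
    field_simp
    ring
  | 1 => by simp
  | r + 2 => by
    have h₀ := qFib_add hq ht n r
    have h₁ := qFib_add hq ht n (r + 1)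
    push_cast at h₀ h₁ ⊢
    rw [show (n : ℤ) + (r + 2) = (n + r : ℕ) + 2 by push_cast; ring, qFib_natCast_add_two,
      qFib_natCast_add_two, show (r : ℤ) + 2 - 1 = (r - 1 : ℤ) + 2 by ring,
      qFib_add_two x hq (mul_ne_zero (pow_ne_zero _ hq) ht), sub_add_cancel]
    push_cast
    rw [add_assoc, h₁, h₀, add_sub_cancel_right, zpow_sub_one₀ hq, zpow_natCast]
    field_simp
    ring

end CarlitzFibonacci

open Matrix

section ProjVandermonde

variable {R : Type*} [CommRing R]

lemma prod_prod_Ioi_const (c : R) : ∀ n : ℕ, ∏ i : Fin n, ∏ _j ∈ Ioi i, c = c ^ n.choose 2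
  | 0 => by simp
  | n + 1 => by
    rw [Fin.prod_univ_succ, Fin.prod_Ioi_zero]
    simp_rw [Fin.prod_Ioi_succ]
    rw [prod_prod_Ioi_const c n, prod_const, card_univ, Fintype.card_fin, Nat.choose_succ_succ',
      Nat.choose_one_right, pow_add]

theorem det_projVandermonde_of_eq_linear {n : ℕ} {v w A B : Fin n → R} (α β γ δ : R)
    (hv : ∀ i, v i = α * A i + β * B i) (hw : ∀ i, w i = γ * A i + δ * B i) :
    (projVandermonde v w).det = (α * δ - β * γ) ^ n.choose 2 * (projVandermonde A B).det := by
  have hminor : ∀ i j, v j * w i - v i * w j = (α * δ - β * γ) * (A j * B i - A i * B j) := by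
    intro i j
    rw [hv, hv, hw, hw]
    ring
  simp_rw [det_projVandermonde, hminor, prod_mul_distrib, prod_prod_Ioi_const]

theorem det_projVandermonde_of_apply_zero_eq_zero {n : ℕ} {A B : Fin (n + 1) → R} (hA : A 0 = 0) :
    (projVandermonde A B).det =
      B 0 ^ n * (∏ j : Fin n, A j.succ) * (projVandermonde (A ∘ Fin.succ) (B ∘ Fin.succ)).det := by
  simp_rw [det_projVandermonde, Fin.prod_univ_succ (fun i => ∏ j ∈ Ioi i, _), Fin.prod_Ioi_zero,
    Fin.prod_Ioi_succ, hA, zero_mul, sub_zero, prod_mul_distrib, prod_const, card_univ,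
    Fintype.card_fin, Function.comp_apply]
  ring

end ProjVandermonde

lemma ddet_zero_eq_det_projVandermonde (q x s : K) (m k : ℕ) :
    ddet q x s 0 m k 0 = (projVandermonde (fun i : Fin (k + 1) => qFib q x s (m * ((i : ℕ) + 1)))
      (fun i => qFib q x (q * s) (m * ((i : ℕ) + 1) - 1))).det := by
  rw [ddet]
  congr 1
  ext i h
  simp [projVandermonde_apply]

lemma ediv_four_eq_choose_two_mul_choose_two_sub_mul (k m : ℕ) :
    (k * m * (k * m + m + k - 3) : ℤ) / 4 =
      ((m + 1).choose 2 * (k + 1).choose 2 : ℕ) - (m * k : ℕ) := by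
  have hc : ∀ n : ℕ, ((n + 1).choose 2 : ℤ) * 2 = (n + 1) * n := fun n => by
    exact_mod_cast (Nat.add_one_mul_choose_eq n 1).symm.trans (by rw [Nat.choose_one_right])
  rw [show (k * m * (k * m + m + k - 3) : ℤ) =
      4 * ((m + 1).choose 2 * (k + 1).choose 2 - m * k) by
    linear_combination (-((k + 1).choose 2 : ℤ) * 2) * hc m - ((m : ℤ) + 1) * m * hc k,
    Int.mul_ediv_cancel_left _ four_ne_zero]
  push_cast
  ring

section Recurrence

variable {q s : K} (x : K)

lemma qFib_mul_add_one (hq : q ≠ 0) (hs : s ≠ 0) (m i : ℕ) :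
    qFib q x s (m * (i + 1)) = qFib q x s (m + 1) * qFib q x (q ^ m * s) (m * i) +
      q ^ m * s * qFib q x s m * qFib q x (q * (q ^ m * s)) (m * i - 1) := by
  have h := qFib_add x hq hs m (m * i)
  push_cast at h
  rw [show (m : ℤ) * (i + 1) = m + m * i by ring, h, show q * (q ^ m * s) = q ^ (m + 1) * s by ring]

lemma qFib_mul_add_one_sub_one (hq : q ≠ 0) (hs : s ≠ 0) (m i : ℕ) :
    qFib q x (q * s) ((m + 1) * (i + 1) - 1) =
      qFib q x (q * s) (m + 1) * qFib q x (q ^ (m + 1) * s) ((m + 1) * i) +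
        q ^ (m + 1) * s * qFib q x (q * s) m *
          qFib q x (q * (q ^ (m + 1) * s)) ((m + 1) * i - 1) := by
  have h := qFib_add x hq (mul_ne_zero hq hs) m ((m + 1) * i)
  push_cast at h
  rw [show ((m : ℤ) + 1) * (i + 1) - 1 = m + (m + 1) * i by ring, h,
    show q ^ m * (q * s) = q ^ (m + 1) * s by ring,
    show q ^ (m + 1) * (q * s) = q * (q ^ (m + 1) * s) by ring]

lemma ddet_zero_eq_pow_mul_det_projVandermonde (hq : q ≠ 0) (hs : s ≠ 0) (m k : ℕ) :
    ddet q x s 0 (m + 1) k 0 =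
      ((-1) ^ (m + 1) * q ^ (m + 1 + 1).choose 2 * s ^ (m + 1)) ^ (k + 1).choose 2 *
        (projVandermonde (fun i : Fin (k + 1) => qFib q x (q ^ (m + 1) * s) ((m + 1) * (i : ℕ)))
          (fun i => qFib q x (q * (q ^ (m + 1) * s)) ((m + 1) * (i : ℕ) - 1))).det := by
  rw [ddet_zero_eq_det_projVandermonde, det_projVandermonde_of_eq_linear _ _ _ _
    (fun i => by exact_mod_cast qFib_mul_add_one x hq hs (m + 1) i)
    (fun i => by exact_mod_cast qFib_mul_add_one_sub_one x hq hs m i)]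
  congr 2
  have hc := qFib_cassini q x s m
  push_cast at hc ⊢
  rw [Nat.choose_succ_succ' (m + 1), Nat.choose_one_right, add_assoc (m : ℤ), one_add_one_eq_two]
  linear_combination (q ^ (m + 1) * s) * hc

end Recurrence

theorem ddet_zero_recurrence (q x s : K) (hq : q ≠ 0) (hs : s ≠ 0)
    (m k : ℕ) (hm : 1 ≤ m) (hk : 1 ≤ k) :
    ddet q x s 0 m k 0 =
      (-1 : K) ^ ((k + 1).choose 2 * m) *
      s ^ (((k + 1).choose 2 : ℤ) * m - k) *
      q ^ ((k * m * (k * m + m + k - 3) : ℤ) / 4) *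
      qFac q x (q ^ m * s) k m *
      ddet q x (q ^ m * s) 0 m (k - 1) 0 := by
  obtain ⟨m, rfl⟩ : ∃ n, m = n + 1 := ⟨m - 1, by omega⟩
  obtain ⟨k, rfl⟩ : ∃ n, k = n + 1 := ⟨k - 1, by omega⟩
  have hfac : qFac q x (q ^ (m + 1) * s) (k + 1) (m + 1) =
      ∏ j : Fin (k + 1), qFib q x (q ^ (m + 1) * s) ((m + 1) * ((j : ℕ) + 1)) := by
    rw [qFac, Fin.prod_univ_eq_prod_range (fun j => qFib q x _ ((m + 1) * ((j : ℤ) + 1)))]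
    exact prod_congr rfl fun j _ => by push_cast; ring_nf
  rw [ddet_zero_eq_pow_mul_det_projVandermonde x hq hs,
    det_projVandermonde_of_apply_zero_eq_zero (by simp), ddet_zero_eq_det_projVandermonde, hfac,
    ediv_four_eq_choose_two_mul_choose_two_sub_mul, Nat.add_sub_cancel, ← Nat.cast_mul,
    zpow_natCast_sub_natCast₀ hs, zpow_natCast_sub_natCast₀ hq]
  simp only [Function.comp_def, Fin.val_succ, Fin.val_zero, Nat.cast_zero, mul_zero, zero_sub,
    qFib_neg_one]
  push_cast
  rw [div_mul_cancel_left₀ hq, mul_pow, mul_pow, ← pow_mul, ← pow_mul, ← pow_mul]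
  ring
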